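/- If f belongs to the class S*_B, then the second-order Hankel determinant H_{2,2}(f) = a_2·a_4 − a_3² satisfies |a_2·a_4 − a_3²| ≤ 1/4. -/

import Mathlib

/-!
Write `w z = c₁ z + c₂ z² + c₃ z³ + ⋯`. Comparing Taylor coefficients in
`z f'(z) (1 - log (1 + w z)) = f z`, using `(1 + w) (log (1 + w))' = w'` for the logarithm, gives
`a₂ = c₁`, `a₃ = 3c₁²/4 + c₂/2`, `a₄ = 19c₁³/36 + 5c₁c₂/6 + c₃/3`, hence
`a₂a₄ - a₃² = c₁c₃/3 - c₂²/4 + c₁²c₂/12 - 5c₁⁴/144`.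
Carlson's inequalities `|c₂| ≤ 1 - |c₁|²` and `|c₃| ≤ 1 - |c₁|² - |c₂|²/(1 + |c₁|)` follow from the
Schwarz–Pick lemma at `0`, applied to `w z / z` and to its composition with the disc automorphism
sending its value at `0` to `0`. After the triangle inequality the bound `1/4` becomes a polynomial
inequality in `|c₁|` and `|c₂|`.
-/
open Complex Metric

/-- The `n`-th Taylor coefficient of `f` at `0`. -/
noncomputable def taylorCoeff (f : ℂ → ℂ) (n : ℕ) : ℂ :=
  iteratedDeriv n f 0 / n.factorial

/-- Membership in the class `S*_B`: `f` is analytic on the unit disk, normalized by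
`f(0) = 0` and `f'(0) = 1`, and there is a Schwarz function `w` with
`z f'(z) (1 - log(1 + w z)) = f z` on the unit disk. -/
def IsSB (f : ℂ → ℂ) : Prop :=
  DifferentiableOn ℂ f (ball (0:ℂ) 1) ∧ f 0 = 0 ∧ deriv f 0 = 1 ∧
  ∃ w : ℂ → ℂ, DifferentiableOn ℂ w (ball (0:ℂ) 1) ∧ w 0 = 0 ∧
    (∀ z ∈ ball (0:ℂ) 1, ‖w z‖ < 1) ∧
    (∀ z ∈ ball (0:ℂ) 1, z * deriv f z * (1 - Complex.log (1 + w z)) = f z)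

open ComplexConjugate Set Filter Topology

section TaylorCoeff

variable {f g : ℂ → ℂ} {n : ℕ}

lemma taylorCoeff_zero (f : ℂ → ℂ) : taylorCoeff f 0 = f 0 := by
  simp [taylorCoeff]

lemma taylorCoeff_one (f : ℂ → ℂ) : taylorCoeff f 1 = deriv f 0 := by
  simp [taylorCoeff]

lemma taylorCoeff_congr (h : f =ᶠ[𝓝 0] g) (n : ℕ) : taylorCoeff f n = taylorCoeff g n := by
  rw [taylorCoeff, taylorCoeff, h.iteratedDeriv_eq n]

lemma taylorCoeff_const_add (c : ℂ) (f : ℂ → ℂ) (hn : n ≠ 0) :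
    taylorCoeff (fun z => c + f z) n = taylorCoeff f n := by
  rw [taylorCoeff, iteratedDeriv_const_add (Nat.pos_of_ne_zero hn), taylorCoeff]

lemma taylorCoeff_const_sub (c : ℂ) (f : ℂ → ℂ) (hn : n ≠ 0) :
    taylorCoeff (fun z => c - f z) n = -taylorCoeff f n := by
  rw [taylorCoeff, iteratedDeriv_const_sub (Nat.pos_of_ne_zero hn), iteratedDeriv_neg, neg_div,
    taylorCoeff]

lemma taylorCoeff_const_mul (c : ℂ) (f : ℂ → ℂ) (n : ℕ) :
    taylorCoeff (fun z => c * f z) n = c * taylorCoeff f n := by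
  rw [taylorCoeff, iteratedDeriv_const_mul_field, taylorCoeff, mul_div_assoc]

lemma taylorCoeff_deriv (f : ℂ → ℂ) (n : ℕ) :
    taylorCoeff (deriv f) n = (n + 1) * taylorCoeff f (n + 1) := by
  rw [taylorCoeff, taylorCoeff, iteratedDeriv_succ', Nat.factorial_succ]
  push_cast
  field_simp

lemma taylorCoeff_eq_zero_of_eqOn_const {c : ℂ} {s : Set ℂ} (hs : s ∈ 𝓝 0)
    (h : EqOn f (fun _ => c) s) (hn : n ≠ 0) : taylorCoeff f n = 0 := by
  rw [taylorCoeff_congr (eventually_of_mem hs h), taylorCoeff, iteratedDeriv_const,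
    if_neg hn, zero_div]

lemma taylorCoeff_mul (hf : ContDiffAt ℂ n f 0) (hg : ContDiffAt ℂ n g 0) :
    taylorCoeff (fun z => f z * g z) n =
      ∑ i ∈ Finset.range (n + 1), taylorCoeff f i * taylorCoeff g (n - i) := by
  rw [taylorCoeff, iteratedDeriv_fun_mul hf hg, Finset.sum_div]
  refine Finset.sum_congr rfl fun i hi => ?_
  have hin : i ≤ n := Nat.lt_succ_iff.mp (Finset.mem_range.mp hi)
  have hchoose : (n.choose i : ℂ) ≠ 0 := by exact_mod_cast (Nat.choose_pos hin).ne'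
  rw [taylorCoeff, taylorCoeff, ← Nat.choose_mul_factorial_mul_factorial hin]
  push_cast
  field_simp

lemma taylorCoeff_id_mul (hg : ContDiffAt ℂ (n + 1) g 0) :
    taylorCoeff (fun z => z * g z) (n + 1) = taylorCoeff g n := by
  rw [taylorCoeff_mul contDiffAt_fun_id hg, Finset.sum_eq_single 1]
  · simp [taylorCoeff_one]
  · intro i _ hi
    rw [taylorCoeff, iteratedDeriv_fun_id_zero, if_neg hi, zero_div, zero_mul]
  · simp

lemma taylorCoeff_dslope (hg : ContDiffAt ℂ (n + 1) (dslope g 0) 0) :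
    taylorCoeff (dslope g 0) n = taylorCoeff g (n + 1) := by
  have hg_eq : g = fun z => g 0 + z * dslope g 0 z := by
    funext z
    have h := sub_smul_dslope g 0 z
    rw [sub_zero, smul_eq_mul] at h
    linear_combination -h
  conv_rhs => rw [hg_eq]
  rw [taylorCoeff_const_add _ _ n.succ_ne_zero, taylorCoeff_id_mul hg]

end TaylorCoeff

section DiscSelfMaps

variable {g : ℂ → ℂ}

lemma eqOn_const_or_mapsTo_ball (hd : DifferentiableOn ℂ g (ball 0 1))
    (hg : MapsTo g (ball 0 1) (closedBall 0 1)) :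
    EqOn g (fun _ => g 0) (ball 0 1) ∨ MapsTo g (ball 0 1) (ball 0 1) := by
  by_cases h : ∃ z₀ ∈ ball (0 : ℂ) 1, ‖g z₀‖ = 1
  · obtain ⟨z₀, hz₀, hnorm⟩ := h
    have hmax : IsMaxOn (norm ∘ g) (ball 0 1) z₀ := fun z hz => by
      simpa [hnorm] using hg hz
    have hconst := eqOn_of_isPreconnected_of_isMaxOn_norm (convex_ball (0 : ℂ) 1).isPreconnected
      isOpen_ball hd hz₀ hmax
    exact .inl fun z hz => (hconst hz).trans (hconst (mem_ball_self one_pos)).symm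
  · push Not at h
    exact .inr fun z hz =>
      mem_ball_zero_iff.2 ((mem_closedBall_zero_iff.1 (hg hz)).lt_of_ne (h z hz))

lemma mapsTo_dslope_zero (hd : DifferentiableOn ℂ g (ball 0 1))
    (hg : MapsTo g (ball 0 1) (closedBall 0 1)) (h0 : g 0 = 0) :
    MapsTo (dslope g 0) (ball 0 1) (closedBall 0 1) := fun z hz => by
  simpa using norm_dslope_le_div_of_mapsTo_ball hd (by rwa [h0]) hz

lemma differentiableOn_dslope_zero (hd : DifferentiableOn ℂ g (ball 0 1)) :
    DifferentiableOn ℂ (dslope g 0) (ball 0 1) :=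
  (differentiableOn_dslope (ball_mem_nhds 0 one_pos)).2 hd

lemma DifferentiableOn.contDiffAt_zero (hd : DifferentiableOn ℂ g (ball 0 1)) (n : ℕ) :
    ContDiffAt ℂ n g 0 :=
  (hd.analyticAt (ball_mem_nhds 0 one_pos)).contDiffAt

lemma norm_sub_lt_norm_one_sub_conj_mul {a u : ℂ} (ha : ‖a‖ < 1) (hu : ‖u‖ < 1) :
    ‖u - a‖ < ‖1 - conj a * u‖ := by
  have hsq : ‖1 - conj a * u‖ ^ 2 - ‖u - a‖ ^ 2 = (1 - ‖a‖ ^ 2) * (1 - ‖u‖ ^ 2) := by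
    apply Complex.ofReal_injective
    push_cast
    simp only [← Complex.conj_mul', map_sub, map_mul, map_one, Complex.conj_conj]
    ring
  have hpos : 0 < (1 - ‖a‖ ^ 2) * (1 - ‖u‖ ^ 2) := by
    apply mul_pos <;> nlinarith [norm_nonneg a, norm_nonneg u]
  nlinarith [norm_nonneg (u - a), norm_nonneg (1 - conj a * u)]

end DiscSelfMaps

section MobiusNormalize

variable {g : ℂ → ℂ}

noncomputable def mobiusNormalize (g : ℂ → ℂ) (z : ℂ) : ℂ :=
  (g z - g 0) / (1 - conj (g 0) * g z)

lemma mobiusNormalize_zero (g : ℂ → ℂ) : mobiusNormalize g 0 = 0 := by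
  simp [mobiusNormalize]

lemma norm_one_sub_conj_mul_pos (hg : MapsTo g (ball 0 1) (ball 0 1)) {z : ℂ}
    (hz : z ∈ ball 0 1) : 0 < ‖1 - conj (g 0) * g z‖ :=
  (norm_nonneg _).trans_lt <| norm_sub_lt_norm_one_sub_conj_mul
    (mem_ball_zero_iff.1 (hg (mem_ball_self one_pos))) (mem_ball_zero_iff.1 (hg hz))

lemma mapsTo_mobiusNormalize (hg : MapsTo g (ball 0 1) (ball 0 1)) :
    MapsTo (mobiusNormalize g) (ball 0 1) (ball 0 1) := fun z hz => by
  rw [mem_ball_zero_iff, mobiusNormalize, norm_div, div_lt_one (norm_one_sub_conj_mul_pos hg hz)]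
  exact norm_sub_lt_norm_one_sub_conj_mul (mem_ball_zero_iff.1 (hg (mem_ball_self one_pos)))
    (mem_ball_zero_iff.1 (hg hz))

lemma differentiableOn_mobiusNormalize (hd : DifferentiableOn ℂ g (ball 0 1))
    (hg : MapsTo g (ball 0 1) (ball 0 1)) : DifferentiableOn ℂ (mobiusNormalize g) (ball 0 1) :=
  (hd.sub_const _).div ((differentiableOn_const 1).sub (hd.const_mul _))
    fun _ hz => norm_pos_iff.1 (norm_one_sub_conj_mul_pos hg hz)

lemma taylorCoeff_eq_mobiusNormalize (hd : DifferentiableOn ℂ g (ball 0 1))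
    (hg : MapsTo g (ball 0 1) (ball 0 1)) :
    taylorCoeff g 1 = (1 - ‖g 0‖ ^ 2 : ℝ) * taylorCoeff (mobiusNormalize g) 1 ∧
    taylorCoeff g 2 = (1 - ‖g 0‖ ^ 2 : ℝ) * taylorCoeff (mobiusNormalize g) 2 -
      conj (g 0) * taylorCoeff (mobiusNormalize g) 1 * taylorCoeff g 1 := by
  set ψ := mobiusNormalize g
  set D : ℂ → ℂ := fun z => 1 - conj (g 0) * g z
  have hψ := differentiableOn_mobiusNormalize hd hg
  have hD : DifferentiableOn ℂ D (ball 0 1) := (differentiableOn_const 1).sub (hd.const_mul _)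
  have hg_eq : g =ᶠ[𝓝 0] fun z => g 0 + ψ z * D z :=
    eventually_of_mem (ball_mem_nhds 0 one_pos) fun z hz => by
      have hD : D z ≠ 0 := norm_pos_iff.1 (norm_one_sub_conj_mul_pos hg hz)
      show g z = g 0 + (g z - g 0) / D z * D z
      rw [div_mul_cancel₀ _ hD]
      ring
  have hcoeff : ∀ n ≠ 0, taylorCoeff g n =
      ∑ i ∈ Finset.range (n + 1), taylorCoeff ψ i * taylorCoeff D (n - i) := fun n hn => by
    rw [taylorCoeff_congr hg_eq, taylorCoeff_const_add _ _ hn,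
      taylorCoeff_mul (hψ.contDiffAt_zero n) (hD.contDiffAt_zero n)]
  have hD0 : taylorCoeff D 0 = (1 - ‖g 0‖ ^ 2 : ℝ) := by
    rw [taylorCoeff_zero]
    simp only [D, Complex.conj_mul']
    push_cast
    rfl
  have hD1 : taylorCoeff D 1 = -(conj (g 0) * taylorCoeff g 1) := by
    rw [taylorCoeff_const_sub _ _ one_ne_zero, taylorCoeff_const_mul]
  have hψ0 : taylorCoeff ψ 0 = 0 := (taylorCoeff_zero ψ).trans (mobiusNormalize_zero g)
  constructor
  · rw [hcoeff 1 one_ne_zero]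
    simp only [Finset.sum_range_succ, Finset.range_one, Finset.sum_singleton, hψ0, tsub_zero,
      zero_mul, tsub_self, hD0, ofReal_sub, ofReal_one, ofReal_pow, zero_add]
    ring
  · rw [hcoeff 2 two_ne_zero]
    simp only [Finset.sum_range_succ, Finset.range_one, Finset.sum_singleton, hψ0, tsub_zero,
      zero_mul, Nat.add_one_sub_one, hD1, mul_neg, zero_add, tsub_self, hD0, ofReal_sub,
      ofReal_one, ofReal_pow]
    ring

end MobiusNormalize

section SchwarzPick

variable {g : ℂ → ℂ}

lemma norm_taylorCoeff_one_le (hd : DifferentiableOn ℂ g (ball 0 1))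
    (hg : MapsTo g (ball 0 1) (closedBall 0 1)) : ‖taylorCoeff g 1‖ ≤ 1 - ‖g 0‖ ^ 2 := by
  have hg0 : ‖g 0‖ ≤ 1 := mem_closedBall_zero_iff.1 (hg (mem_ball_self one_pos))
  rcases eqOn_const_or_mapsTo_ball hd hg with hconst | hg'
  · rw [taylorCoeff_eq_zero_of_eqOn_const (ball_mem_nhds 0 one_pos) hconst one_ne_zero, norm_zero]
    nlinarith [norm_nonneg (g 0)]
  · have hψ1 : ‖taylorCoeff (mobiusNormalize g) 1‖ ≤ 1 := by
      rw [taylorCoeff_one]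
      refine norm_deriv_le_one_of_mapsTo_ball (differentiableOn_mobiusNormalize hd hg') ?_ one_pos
      rw [mobiusNormalize_zero]
      exact (mapsTo_mobiusNormalize hg').mono_right ball_subset_closedBall
    have hx : 0 ≤ 1 - ‖g 0‖ ^ 2 := by nlinarith [norm_nonneg (g 0)]
    rw [(taylorCoeff_eq_mobiusNormalize hd hg').1, norm_mul, Complex.norm_real,
      Real.norm_of_nonneg hx]
    exact mul_le_of_le_one_right hx hψ1

lemma norm_taylorCoeff_two_le (hd : DifferentiableOn ℂ g (ball 0 1))
    (hg : MapsTo g (ball 0 1) (closedBall 0 1)) :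
    ‖taylorCoeff g 2‖ ≤ 1 - ‖g 0‖ ^ 2 - ‖taylorCoeff g 1‖ ^ 2 / (1 + ‖g 0‖) := by
  have hg0 : ‖g 0‖ ≤ 1 := mem_closedBall_zero_iff.1 (hg (mem_ball_self one_pos))
  rcases eqOn_const_or_mapsTo_ball hd hg with hconst | hg'
  · rw [taylorCoeff_eq_zero_of_eqOn_const (ball_mem_nhds 0 one_pos) hconst two_ne_zero,
      taylorCoeff_eq_zero_of_eqOn_const (ball_mem_nhds 0 one_pos) hconst one_ne_zero]
    simp only [norm_zero, zero_pow two_ne_zero, zero_div, sub_zero]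
    nlinarith [norm_nonneg (g 0)]
  set ψ := mobiusNormalize g
  have hψ := differentiableOn_mobiusNormalize hd hg'
  have hdslope := differentiableOn_dslope_zero hψ
  have hψ2 : ‖taylorCoeff ψ 2‖ ≤ 1 - ‖taylorCoeff ψ 1‖ ^ 2 := by
    have h := norm_taylorCoeff_one_le hdslope <| mapsTo_dslope_zero hψ
      ((mapsTo_mobiusNormalize hg').mono_right ball_subset_closedBall) (mobiusNormalize_zero g)
    rwa [← taylorCoeff_zero (dslope ψ 0), taylorCoeff_dslope (hdslope.contDiffAt_zero _),
      taylorCoeff_dslope (hdslope.contDiffAt_zero _)] at h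
  obtain ⟨h1, h2⟩ := taylorCoeff_eq_mobiusNormalize hd hg'
  set x := ‖g 0‖
  set e := ‖taylorCoeff ψ 1‖
  have hx : x < 1 := mem_ball_zero_iff.1 (hg' (mem_ball_self one_pos))
  have hx0 : 0 ≤ x := norm_nonneg _
  have hs : 0 ≤ 1 - x ^ 2 := by nlinarith
  have hnorm1 : ‖taylorCoeff g 1‖ = (1 - x ^ 2) * e := by
    rw [h1, norm_mul, Complex.norm_real, Real.norm_of_nonneg hs]
  have hnorm2 :
      ‖taylorCoeff g 2‖ ≤ (1 - x ^ 2) * ‖taylorCoeff ψ 2‖ + x * e * ‖taylorCoeff g 1‖ := by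
    rw [h2]
    refine (norm_sub_le _ _).trans_eq ?_
    rw [norm_mul, norm_mul, norm_mul, Complex.norm_real, Real.norm_of_nonneg hs, Complex.norm_conj]
  have hquot : ((1 - x ^ 2) * e) ^ 2 / (1 + x) = (1 - x) * (1 - x ^ 2) * e ^ 2 := by
    field_simp
    ring
  rw [hnorm1] at hnorm2 ⊢
  rw [hquot]
  nlinarith [mul_le_mul_of_nonneg_left hψ2 hs]

/-- Carlson's coefficient inequalities for a Schwarz function. -/
lemma norm_taylorCoeff_le_of_schwarz {w : ℂ → ℂ} (hd : DifferentiableOn ℂ w (ball 0 1))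
    (hw : MapsTo w (ball 0 1) (closedBall 0 1)) (h0 : w 0 = 0) :
    ‖taylorCoeff w 2‖ ≤ 1 - ‖taylorCoeff w 1‖ ^ 2 ∧
    ‖taylorCoeff w 3‖ ≤
      1 - ‖taylorCoeff w 1‖ ^ 2 - ‖taylorCoeff w 2‖ ^ 2 / (1 + ‖taylorCoeff w 1‖) := by
  have hφ := differentiableOn_dslope_zero hd
  have hmaps := mapsTo_dslope_zero hd hw h0
  have hcoeff : ∀ n, taylorCoeff (dslope w 0) n = taylorCoeff w (n + 1) := fun n =>
    taylorCoeff_dslope (hφ.contDiffAt_zero _)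
  have h1 := norm_taylorCoeff_one_le hφ hmaps
  have h2 := norm_taylorCoeff_two_le hφ hmaps
  rw [← taylorCoeff_zero (dslope w 0)] at h1 h2
  simp only [hcoeff] at h1 h2
  exact ⟨h1, h2⟩

end SchwarzPick

section Coefficients

variable {f w : ℂ → ℂ}

lemma taylorCoeff_log_one_add (hw : AnalyticAt ℂ w 0) (h0 : w 0 = 0) :
    taylorCoeff (fun z => log (1 + w z)) 1 = taylorCoeff w 1 ∧
    taylorCoeff (fun z => log (1 + w z)) 2 = taylorCoeff w 2 - taylorCoeff w 1 ^ 2 / 2 ∧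
    taylorCoeff (fun z => log (1 + w z)) 3 =
      taylorCoeff w 3 - taylorCoeff w 1 * taylorCoeff w 2 + taylorCoeff w 1 ^ 3 / 3 := by
  set L : ℂ → ℂ := fun z => log (1 + w z)
  have h1 : 1 + w 0 ∈ slitPlane := by simp [h0]
  have hw1 : AnalyticAt ℂ (fun z => 1 + w z) 0 := analyticAt_const.add hw
  have hL : AnalyticAt ℂ L 0 := hw1.clog h1
  have hnear : ∀ᶠ z in 𝓝 0, AnalyticAt ℂ w z ∧ 1 + w z ∈ slitPlane :=
    hw.eventually_analyticAt.and
      ((hw.continuousAt.const_add 1).preimage_mem_nhds (isOpen_slitPlane.mem_nhds h1))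
  have hderiv : deriv w =ᶠ[𝓝 0] fun z => (1 + w z) * deriv L z := hnear.mono fun z hz => by
    show deriv w z = (1 + w z) * deriv (fun t => log (1 + w t)) z
    rw [((hz.1.differentiableAt.hasDerivAt.const_add 1).clog hz.2).deriv,
      mul_div_cancel₀ _ (slitPlane_ne_zero hz.2)]
  have hrec : ∀ n, (n + 1) * taylorCoeff w (n + 1) = ∑ i ∈ Finset.range (n + 1),
      taylorCoeff (fun z => 1 + w z) i * ((↑(n - i) + 1) * taylorCoeff L (n - i + 1)) := by
    intro n
    rw [← taylorCoeff_deriv, taylorCoeff_congr hderiv,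
      taylorCoeff_mul hw1.contDiffAt hL.deriv.contDiffAt]
    simp only [taylorCoeff_deriv]
  have hw0 : taylorCoeff (fun z => 1 + w z) 0 = 1 := by simp [taylorCoeff_zero, h0]
  have r0 : taylorCoeff w 1 = taylorCoeff L 1 := by
    simpa [hw0] using hrec 0
  have r1 : 2 * taylorCoeff w 2 = 2 * taylorCoeff L 2 + taylorCoeff w 1 * taylorCoeff L 1 := by
    have h := hrec 1
    norm_num [Finset.sum_range_succ, hw0, taylorCoeff_const_add] at h
    linear_combination h
  have r2 : 3 * taylorCoeff w 3 = 3 * taylorCoeff L 3 + 2 * taylorCoeff w 1 * taylorCoeff L 2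
      + taylorCoeff w 2 * taylorCoeff L 1 := by
    have h := hrec 2
    norm_num [Finset.sum_range_succ, hw0, taylorCoeff_const_add] at h
    linear_combination h
  have hl2 : taylorCoeff L 2 = taylorCoeff w 2 - taylorCoeff w 1 ^ 2 / 2 := by
    linear_combination (-r1 + taylorCoeff w 1 * r0) / 2
  refine ⟨r0.symm, hl2, ?_⟩
  linear_combination -r2 / 3 - 2 * taylorCoeff w 1 / 3 * hl2 + taylorCoeff w 2 / 3 * r0

lemma taylorCoeff_of_mul_deriv_mul_one_sub_log_eq (hf : AnalyticAt ℂ f 0)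
    (hw : AnalyticAt ℂ w 0) (h0 : w 0 = 0) (hf1 : deriv f 0 = 1)
    (heq : ∀ᶠ z in 𝓝 0, z * deriv f z * (1 - log (1 + w z)) = f z) :
    taylorCoeff f 2 = taylorCoeff w 1 ∧
    taylorCoeff f 3 = 3 / 4 * taylorCoeff w 1 ^ 2 + taylorCoeff w 2 / 2 ∧
    taylorCoeff f 4 = 19 / 36 * taylorCoeff w 1 ^ 3 + 5 / 6 * taylorCoeff w 1 * taylorCoeff w 2
      + taylorCoeff w 3 / 3 := by
  obtain ⟨hl1, hl2, hl3⟩ := taylorCoeff_log_one_add hw h0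
  set L : ℂ → ℂ := fun z => log (1 + w z)
  have hL : AnalyticAt ℂ (fun z => 1 - L z) 0 :=
    analyticAt_const.sub ((analyticAt_const.add hw).clog (by simp [h0]))
  have hfL : AnalyticAt ℂ (fun z => deriv f z * (1 - L z)) 0 := hf.deriv.mul hL
  have hf_eq : f =ᶠ[𝓝 0] fun z => z * (deriv f z * (1 - L z)) :=
    heq.mono fun z hz => by rw [← hz, mul_assoc]
  have hrec : ∀ n, taylorCoeff f (n + 1) = ∑ i ∈ Finset.range (n + 1),
      (i + 1) * taylorCoeff f (i + 1) * taylorCoeff (fun z => 1 - L z) (n - i) := by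
    intro n
    rw [taylorCoeff_congr hf_eq, taylorCoeff_id_mul hfL.contDiffAt,
      taylorCoeff_mul hf.deriv.contDiffAt hL.contDiffAt]
    simp only [taylorCoeff_deriv]
  have hL0 : taylorCoeff (fun z => 1 - L z) 0 = 1 := by simp [taylorCoeff_zero, L, h0]
  have ha1 : taylorCoeff f 1 = 1 := by rw [taylorCoeff_one, hf1]
  have r1 : taylorCoeff f 2 = taylorCoeff L 1 := by
    have h := hrec 1
    norm_num [Finset.sum_range_succ, hL0, ha1, taylorCoeff_const_sub] at h
    linear_combination -h
  have r2 : 2 * taylorCoeff f 3 = taylorCoeff L 2 + 2 * taylorCoeff f 2 * taylorCoeff L 1 := by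
    have h := hrec 2
    norm_num [Finset.sum_range_succ, hL0, ha1, taylorCoeff_const_sub] at h
    linear_combination -h
  have r3 : 3 * taylorCoeff f 4 = taylorCoeff L 3 + 2 * taylorCoeff f 2 * taylorCoeff L 2
      + 3 * taylorCoeff f 3 * taylorCoeff L 1 := by
    have h := hrec 3
    norm_num [Finset.sum_range_succ, hL0, ha1, taylorCoeff_const_sub] at h
    linear_combination -h
  have ha2 : taylorCoeff f 2 = taylorCoeff w 1 := r1.trans hl1
  rw [hl1, hl2, ha2] at r2
  have ha3 : taylorCoeff f 3 = 3 / 4 * taylorCoeff w 1 ^ 2 + taylorCoeff w 2 / 2 := by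
    linear_combination r2 / 2
  rw [hl1, hl2, hl3, ha2, ha3] at r3
  exact ⟨ha2, ha3, by linear_combination r3 / 3⟩

end Coefficients

lemma hankel_majorant_le_quarter {x y : ℝ} (hx : 0 ≤ x) (hy : 0 ≤ y) (hxy : y ≤ 1 - x ^ 2) :
    x * (1 - x ^ 2 - y ^ 2 / (1 + x)) / 3 + y ^ 2 / 4 + x ^ 2 * y / 12 + 5 * x ^ 4 / 144
      ≤ 1 / 4 := by
  rcases (show x ≤ 1 by nlinarith).eq_or_lt with rfl | hx1
  · obtain rfl : y = 0 := by linarith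
    norm_num
  have hs : 0 < 1 - x ^ 2 := by nlinarith
  have hr : 0 ≤ 1 - x ^ 2 - y := by linarith
  have h3x : 0 ≤ 3 - x := by linarith
  have h1x : 0 ≤ 1 - x := by linarith
  set E := x * (1 - x ^ 2 - y ^ 2 / (1 + x)) / 3 + y ^ 2 / 4 + x ^ 2 * y / 12
    + 5 * x ^ 4 / 144 with hE
  have key : (1 - x ^ 2) * (1 / 4 - E) =
      ((1 - x) * (3 - x) * ((1 - x ^ 2 - y) * (1 - x ^ 2 + y))
        + x ^ 2 * (1 - x ^ 2) * (1 - x ^ 2 - y)) / 12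
      + (1 - x ^ 2) * (x ^ 2 / 12 + 19 * x ^ 4 / 144) := by
    rw [hE]
    field_simp
    ring
  have hprod : 0 ≤ (1 - x ^ 2) * (1 / 4 - E) := by
    rw [key]
    positivity
  linarith [(mul_nonneg_iff_of_pos_left hs).1 hprod]

lemma norm_hankel_poly_le {c₁ c₂ c₃ : ℂ} (h₂ : ‖c₂‖ ≤ 1 - ‖c₁‖ ^ 2)
    (h₃ : ‖c₃‖ ≤ 1 - ‖c₁‖ ^ 2 - ‖c₂‖ ^ 2 / (1 + ‖c₁‖)) :
    ‖c₁ * c₃ / 3 - c₂ ^ 2 / 4 + c₁ ^ 2 * c₂ / 12 - 5 * c₁ ^ 4 / 144‖ ≤ 1 / 4 := by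
  calc ‖c₁ * c₃ / 3 - c₂ ^ 2 / 4 + c₁ ^ 2 * c₂ / 12 - 5 * c₁ ^ 4 / 144‖
      ≤ ‖c₁ * c₃ / 3‖ + ‖c₂ ^ 2 / 4‖ + ‖c₁ ^ 2 * c₂ / 12‖ + ‖5 * c₁ ^ 4 / 144‖ := by
        refine (norm_sub_le _ _).trans ?_
        gcongr
        exact (norm_add_le _ _).trans (by gcongr; exact norm_sub_le _ _)
    _ = ‖c₁‖ * ‖c₃‖ / 3 + ‖c₂‖ ^ 2 / 4 + ‖c₁‖ ^ 2 * ‖c₂‖ / 12 + 5 * ‖c₁‖ ^ 4 / 144 := by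
        simp
    _ ≤ ‖c₁‖ * (1 - ‖c₁‖ ^ 2 - ‖c₂‖ ^ 2 / (1 + ‖c₁‖)) / 3 + ‖c₂‖ ^ 2 / 4
          + ‖c₁‖ ^ 2 * ‖c₂‖ / 12 + 5 * ‖c₁‖ ^ 4 / 144 := by gcongr
    _ ≤ 1 / 4 := hankel_majorant_le_quarter (norm_nonneg _) (norm_nonneg _) h₂

theorem hankel_H22 (f : ℂ → ℂ) (hf : IsSB f) :
    ‖taylorCoeff f 2 * taylorCoeff f 4 - (taylorCoeff f 3) ^ 2‖ ≤ 1 / 4 := by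
  obtain ⟨hfd, -, hf1, w, hwd, hw0, hwlt, heq⟩ := hf
  have hnhds : ball (0 : ℂ) 1 ∈ 𝓝 0 := ball_mem_nhds 0 one_pos
  obtain ⟨ha₂, ha₃, ha₄⟩ := taylorCoeff_of_mul_deriv_mul_one_sub_log_eq (hfd.analyticAt hnhds)
    (hwd.analyticAt hnhds) hw0 hf1 (eventually_of_mem hnhds heq)
  obtain ⟨hc₂, hc₃⟩ := norm_taylorCoeff_le_of_schwarz hwd
    (fun z hz => mem_closedBall_zero_iff.2 (hwlt z hz).le) hw0
  rw [ha₂, ha₃, ha₄]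
  convert norm_hankel_poly_le hc₂ hc₃ using 2
  ring
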